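/- arXiv:1108.2437 — 5 statements merged into one kernel-verified Lean document; each statement's English description precedes it below -/
import Mathlib

section
/- Let h be a positive integer coprime to p, suppose F contains a primitive h-th root of unity, and let π ∈ O be a uniformizer. Then the polynomial X^h − π is irreducible over F, and the field E = F[X]/(X^h − π) is a totally ramified Galois extension of F of degree h. -/
/-!
`X ^ h - π` is Eisenstein at the uniformizer, hence irreducible over `F` by Gauss's lemma. A field
`E = F[x]` with `x ^ h = π` contains all the roots `ζ ^ i * x`, so it is the splitting field of a
separable polynomial: Galois of degree `h` (Kummer theory).

For the ramification, the discriminant of the power basis `1, x, …, x ^ (h - 1)` is a unit times a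
power of `π`, and since the minimal polynomial of `x` is Eisenstein each factor `π` can be divided
out, so the integral closure of `O` is `O[x]`. Writing an element of `O[x]` as `x * q(x) + c` with
`c ∈ O` shows that its maximal ideal is `(x)`, and `π = x ^ h` gives `m_O O_E = (x) ^ h`.
-/

universe u

open Polynomial IsLocalRing

namespace Polynomial

theorem isEisensteinAt_X_pow_sub_C {R : Type*} [CommRing R] [IsDomain R] {π : R} (hπ : Prime π)
    {n : ℕ} (hn : 0 < n) : (X ^ n - C π).IsEisensteinAt (Ideal.span {π}) := by
  have hdeg : (X ^ n - C π).natDegree = n := natDegree_X_pow_sub_C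
  refine ⟨?_, fun {i} hi => ?_, ?_⟩
  · rw [(monic_X_pow_sub_C π hn.ne').leadingCoeff, Ideal.mem_span_singleton]
    exact hπ.not_dvd_one
  · rw [hdeg] at hi
    rw [coeff_sub, coeff_X_pow, if_neg hi.ne, coeff_C, zero_sub, neg_mem_iff]
    split_ifs
    · exact Ideal.mem_span_singleton_self π
    · exact Ideal.zero_mem _
  · rw [coeff_sub, coeff_X_pow, if_neg hn.ne, coeff_C_zero, zero_sub, neg_mem_iff,
      Ideal.span_singleton_pow, Ideal.mem_span_singleton, pow_two]
    exact fun hdvd => hπ.not_dvd_one ((mul_dvd_mul_iff_left hπ.ne_zero).1 (by simpa using hdvd))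

theorem irreducible_X_pow_sub_C_algebraMap {R : Type*} (K : Type*) [CommRing R] [IsDomain R]
    [IsIntegrallyClosed R] [Field K] [Algebra R K] [IsFractionRing R K] {π : R} (hπ : Prime π)
    {n : ℕ} (hn : 0 < n) : Irreducible (X ^ n - C (algebraMap R K π)) := by
  have hmonic := monic_X_pow_sub_C π hn.ne'
  have hirr : Irreducible (X ^ n - C π) :=
    (isEisensteinAt_X_pow_sub_C hπ hn).irreducible ((Ideal.span_singleton_prime hπ.ne_zero).2 hπ)
      hmonic.isPrimitive (by rwa [natDegree_X_pow_sub_C])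
  simpa using (hmonic.irreducible_iff_irreducible_map_fraction_map (K := K)).1 hirr

end Polynomial

theorem minpoly.eq_X_pow_sub_C_of_prime {R K L : Type*} [CommRing R] [IsDomain R]
    [IsIntegrallyClosed R] [Field K] [Algebra R K] [IsFractionRing R K] [Field L] [Algebra K L]
    [Algebra R L] [IsScalarTower R K L] {π : R} (hπ : Prime π) {n : ℕ} (hn : 0 < n) {x : L}
    (hx : x ^ n = algebraMap R L π) : minpoly R x = X ^ n - C π := by
  have hroot : Polynomial.aeval x (X ^ n - C π) = 0 := by simp [hx]
  have hint : IsIntegral R x := ⟨_, monic_X_pow_sub_C π hn.ne', by rwa [← Polynomial.aeval_def]⟩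
  have hminK : minpoly K x = (X ^ n - C π).map (algebraMap R K) := by
    refine (minpoly.eq_of_irreducible_of_monic ?_ ?_ ?_).symm
    · simpa using irreducible_X_pow_sub_C_algebraMap K hπ hn
    · rwa [aeval_map_algebraMap]
    · exact (monic_X_pow_sub_C π hn.ne').map _
  refine map_injective _ (IsFractionRing.injective R K) ?_
  rw [← hminK, minpoly.isIntegrallyClosed_eq_field_fractions' K hint]

theorem isSplittingField_X_pow_sub_C_of_adjoin_eq_top {K L : Type*} [Field K] [Field L]
    [Algebra K L] {n : ℕ} (hn : 0 < n) {ζ : K} (hζ : IsPrimitiveRoot ζ n) {a : K} {x : L}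
    (hx : x ^ n = algebraMap K L a) (hadj : Algebra.adjoin K {x} = ⊤) :
    IsSplittingField K L (X ^ n - C a) := by
  constructor
  · rw [Polynomial.map_sub, Polynomial.map_pow, map_C, map_X]
    exact X_pow_sub_C_splits_of_isPrimitiveRoot (hζ.map_of_injective (algebraMap K L).injective) hx
  · rw [eq_top_iff, ← hadj, Algebra.adjoin_le_iff, Set.singleton_subset_iff]
    apply Algebra.subset_adjoin
    rw [mem_rootSet_of_ne (X_pow_sub_C_ne_zero hn a)]
    simp [hx]

theorem IsDiscreteValuationRing.mem_adjoin_of_minpoly_isEisensteinAt {O K L : Type*}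
    [CommRing O] [IsDomain O] [IsDiscreteValuationRing O] [Field K] [Algebra O K]
    [IsFractionRing O K] [Field L] [Algebra K L] [Algebra O L] [IsScalarTower O K L]
    [Algebra.IsSeparable K L] {ϖ : O} (hϖ : Irreducible ϖ) {x : L} (hx : IsIntegral O x)
    (hadj : Algebra.adjoin K {x} = ⊤)
    (hei : (minpoly O x).IsEisensteinAt (Ideal.span {ϖ})) {z : L} (hz : IsIntegral O z) :
    z ∈ Algebra.adjoin O {x} := by
  let B := PowerBasis.ofAdjoinEqTop (hx.tower_top (A := K)) hadj
  have hB : B.gen = x := PowerBasis.ofAdjoinEqTop_gen _ _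
  have := B.finite
  obtain ⟨d, hd⟩ := IsIntegrallyClosed.isIntegral_iff (R := O).1 <|
    Algebra.discr_isIntegral K (b := B.basis) fun i => by rw [B.basis_eq_pow i, hB]; exact hx.pow _
  have hd0 : d ≠ 0 := by
    rintro rfl
    exact Algebra.discr_not_zero_of_basis K B.basis (by rw [← hd, map_zero])
  obtain ⟨m, u, rfl⟩ := eq_unit_mul_pow_irreducible hd0 hϖ
  have hmem : (u * ϖ ^ m : O) • z ∈ Algebra.adjoin O {x} := by
    have := Algebra.discr_mul_isIntegral_mem_adjoin K (hB ▸ hx) hz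
    rwa [← hd, algebraMap_smul, hB] at this
  have hmem' : ϖ ^ m • z ∈ Algebra.adjoin O {x} := by
    simpa [smul_smul, ← mul_assoc] using Subalgebra.smul_mem _ hmem ((u⁻¹ : Oˣ) : O)
  rw [← hB] at hmem' hei ⊢
  exact mem_adjoin_of_smul_prime_pow_smul_of_minpoly_isEisensteinAt hϖ.prime (hB ▸ hx) hz hmem' hei

theorem IsLocalRing.maximalIdeal_eq_span_singleton_of_aeval_surjective {O R : Type*} [CommRing O]
    [IsLocalRing O] [CommRing R] [IsLocalRing R] [Algebra O R] [IsLocalHom (algebraMap O R)]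
    {y : R} (hsurj : Function.Surjective (aeval (R := O) y)) (hy : y ∈ maximalIdeal R)
    (hmap : (maximalIdeal O).map (algebraMap O R) ≤ Ideal.span {y}) :
    maximalIdeal R = Ideal.span {y} := by
  refine le_antisymm (fun z hz => ?_) ((Ideal.span_singleton_le_iff_mem _).2 hy)
  obtain ⟨Q, rfl⟩ := hsurj z
  have hsplit : aeval y Q = aeval y Q.divX * y + algebraMap O R (Q.coeff 0) := by
    conv_lhs => rw [← divX_mul_X_add Q]
    simp
  have hcoeff : Q.coeff 0 ∈ maximalIdeal O := by
    refine fun hu => (mem_maximalIdeal _).1 ?_ ((isUnit_map_iff (algebraMap O R) _).2 hu)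
    have := sub_mem hz (Ideal.mul_mem_left _ (aeval y Q.divX) hy)
    rwa [hsplit, add_sub_cancel_left] at this
  rw [hsplit]
  exact add_mem (Ideal.mul_mem_left _ _ (Ideal.mem_span_singleton_self y))
    (hmap (Ideal.mem_map_of_mem _ hcoeff))

theorem integralClosure.aeval_surjective {R A : Type*} [CommRing R] [CommRing A] [Algebra R A]
    {x : A} (hx : IsIntegral R x) (hadj : ∀ z, IsIntegral R z → z ∈ Algebra.adjoin R {x}) :
    Function.Surjective (aeval (R := R) (⟨x, hx⟩ : integralClosure R A)) := by
  intro z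
  obtain ⟨Q, hQ⟩ := (Algebra.adjoin_singleton_eq_range_aeval R x ▸ hadj z z.2 :)
  exact ⟨Q, Subtype.ext <| by
    rw [← hQ]; exact (aeval_algHom_apply (integralClosure R A).val _ Q).symm⟩

theorem map_maximalIdeal_integralClosure_eq_pow_of_pow_eq_uniformizer {O K L : Type*}
    [CommRing O] [IsDomain O] [IsDiscreteValuationRing O] [Field K] [Algebra O K]
    [IsFractionRing O K] [Field L] [Algebra K L] [Algebra O L] [IsScalarTower O K L]
    [Algebra.IsSeparable K L] [IsLocalRing (integralClosure O L)] {π : O}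
    (hπ : maximalIdeal O = Ideal.span {π}) {n : ℕ} (hn : 0 < n) {x : L}
    (hx : x ^ n = algebraMap O L π) (hadj : Algebra.adjoin K {x} = ⊤) :
    (maximalIdeal O).map (algebraMap O (integralClosure O L)) =
      maximalIdeal (integralClosure O L) ^ n := by
  have hϖ : Irreducible π := (IsDiscreteValuationRing.irreducible_iff_uniformizer π).2 hπ
  have hxint : IsIntegral O x := ⟨_, monic_X_pow_sub_C π hn.ne', by simp [eval₂_X_pow, hx]⟩
  let y : integralClosure O L := ⟨x, hxint⟩
  have hyn : y ^ n = algebraMap O _ π := Subtype.ext hx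
  have : FaithfulSMul O L := FaithfulSMul.trans O K L
  have : FaithfulSMul O (integralClosure O L) := FaithfulSMul.tower_bot O _ L
  have hy : y ∈ maximalIdeal (integralClosure O L) := fun hu =>
    hϖ.not_isUnit ((isUnit_map_iff (algebraMap O _) π).1 (hyn ▸ hu.pow n))
  have hmap : (maximalIdeal O).map (algebraMap O (integralClosure O L)) = Ideal.span {y} ^ n := by
    rw [hπ, Ideal.map_span, Set.image_singleton, ← hyn, Ideal.span_singleton_pow]
  have hei : (minpoly O x).IsEisensteinAt (Ideal.span {π}) := by
    rw [minpoly.eq_X_pow_sub_C_of_prime (K := K) hϖ.prime hn hx]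
    exact isEisensteinAt_X_pow_sub_C hϖ.prime hn
  have hsurj := integralClosure.aeval_surjective hxint fun z hz =>
    IsDiscreteValuationRing.mem_adjoin_of_minpoly_isEisensteinAt hϖ hxint hadj hei hz
  rw [hmap, maximalIdeal_eq_span_singleton_of_aeval_surjective hsurj hy
    (hmap ▸ Ideal.pow_le_self hn.ne')]

theorem xPowSubUniformizer_irreducible_and_totallyRamified_galois_general
    (O : Type*) [CommRing O] [IsDomain O] [IsDiscreteValuationRing O]
    (F : Type*) [Field F] [Algebra O F] [IsFractionRing O F]
    (h : ℕ) (hpos : 0 < h)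
    (hζ : ∃ ζ : F, IsPrimitiveRoot ζ h)
    (π : O) (hπ : IsLocalRing.maximalIdeal O = Ideal.span {π}) :
    Irreducible (Polynomial.X ^ h - Polynomial.C (algebraMap O F π)) ∧
    ∀ (E : Type u) [Field E] [Algebra F E] [Algebra O E] [IsScalarTower O F E]
      [IsLocalRing (integralClosure O E)] (x : E),
      Polynomial.aeval x (Polynomial.X ^ h - Polynomial.C (algebraMap O F π)) = 0 →
      Algebra.adjoin F {x} = ⊤ →
      IsGalois F E ∧ Module.finrank F E = h ∧
        Ideal.map (algebraMap O (integralClosure O E)) (IsLocalRing.maximalIdeal O) =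
          IsLocalRing.maximalIdeal (integralClosure O E) ^ h := by
  obtain ⟨ζ, hζ⟩ := hζ
  have hroots : (primitiveRoots h F).Nonempty := ⟨ζ, (mem_primitiveRoots hpos).2 hζ⟩
  have hirr := irreducible_X_pow_sub_C_algebraMap F
    ((IsDiscreteValuationRing.irreducible_iff_uniformizer π).2 hπ).prime hpos
  refine ⟨hirr, fun E _ _ _ _ _ x hx hadj => ?_⟩
  have hxh : x ^ h = algebraMap F E (algebraMap O F π) := by simpa [sub_eq_zero] using hx
  have hsplit := isSplittingField_X_pow_sub_C_of_adjoin_eq_top hpos hζ hxh hadj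
  have hgal := isGalois_of_isSplittingField_X_pow_sub_C hroots hirr E
  refine ⟨hgal, finrank_of_isSplittingField_X_pow_sub_C hroots hirr E, ?_⟩
  rw [← IsScalarTower.algebraMap_apply] at hxh
  exact map_maximalIdeal_integralClosure_eq_pow_of_pow_eq_uniformizer hπ hpos hxh hadj

/-- Let `O` be a complete discrete valuation ring with finite residue
field of characteristic `p`, with fraction field `F`.  Let `h` be a positive integer
coprime to `p`, suppose `F` contains a primitive `h`-th root of unity, and let `π ∈ O` be
a uniformizer (a generator of the maximal ideal).  Then `X^h - π` is irreducible over
`F`, and the field `E = F[X]/(X^h - π)` — i.e. any field `E/F` generated by a root `x`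
of `X^h - π` — is a totally ramified Galois extension of `F` of degree `h`. -/
theorem xPowSubUniformizer_irreducible_and_totallyRamified_galois
    (O : Type*) [CommRing O] [IsDomain O] [IsDiscreteValuationRing O]
    [IsAdicComplete (IsLocalRing.maximalIdeal O) O]
    (F : Type*) [Field F] [Algebra O F] [IsFractionRing O F]
    (p : ℕ) [Fact p.Prime]
    [Finite (IsLocalRing.ResidueField O)] [CharP (IsLocalRing.ResidueField O) p]
    (h : ℕ) (hpos : 0 < h) (hcop : Nat.Coprime h p)
    (hζ : ∃ ζ : F, IsPrimitiveRoot ζ h)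
    (π : O) (hπ : IsLocalRing.maximalIdeal O = Ideal.span {π}) :
    Irreducible (Polynomial.X ^ h - Polynomial.C (algebraMap O F π)) ∧
    ∀ (E : Type u) [Field E] [Algebra F E] [Algebra O E] [IsScalarTower O F E]
      [IsLocalRing (integralClosure O E)] (x : E),
      Polynomial.aeval x (Polynomial.X ^ h - Polynomial.C (algebraMap O F π)) = 0 →
      Algebra.adjoin F {x} = ⊤ →
      IsGalois F E ∧ Module.finrank F E = h ∧
        Ideal.map (algebraMap O (integralClosure O E)) (IsLocalRing.maximalIdeal O) =
          IsLocalRing.maximalIdeal (integralClosure O E) ^ h :=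
  xPowSubUniformizer_irreducible_and_totallyRamified_galois_general O F h hpos hζ π hπ
end

section
/- Every Coxeter element c of the Weyl group W has no nonzero fixed vector in V; that is, ker(c − id_V) = {0}. -/
open Module

/-- A finite, reduced, crystallographic root system spanning the `ℚ`-vector space `V`,
given together with its coroots (viewed as linear functionals via the pairing
`⟨·, α^∨⟩`). -/
structure RootSystemData (V : Type*) [AddCommGroup V] [Module ℚ V] where
  /-- The set of roots `R ⊆ V`. -/
  roots : Set V
  finite : roots.Finite
  zero_not_mem : (0 : V) ∉ roots
  span_eq_top : Submodule.span ℚ roots = ⊤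
  /-- The coroot pairing `x ↦ ⟨x, α^∨⟩`. -/
  coroot : V → (V →ₗ[ℚ] ℚ)
  coroot_self : ∀ α ∈ roots, coroot α α = 2
  /-- Each reflection `s_α : x ↦ x - ⟨x, α^∨⟩α` maps `R` into itself. -/
  reflection_mem : ∀ α ∈ roots, ∀ β ∈ roots, β - coroot α β • α ∈ roots
  /-- Crystallographic condition: `⟨β, α^∨⟩ ∈ ℤ` for all roots `α, β`. -/
  crystallographic : ∀ α ∈ roots, ∀ β ∈ roots, ∃ n : ℤ, coroot α β = (n : ℚ)
  /-- Reduced: the only multiples of a root `α` which are roots are `±α`. -/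
  reduced : ∀ α ∈ roots, ∀ t : ℚ, t • α ∈ roots → t = 1 ∨ t = -1

namespace RootSystemData

variable {V : Type*} [AddCommGroup V] [Module ℚ V] (RS : RootSystemData V)

/-- The reflection `s_α` in a root `α`, as a linear endomorphism of `V`. -/
def reflMap (α : V) : V →ₗ[ℚ] V :=
  LinearMap.id - LinearMap.smulRight (RS.coroot α) α

lemma reflMap_apply (α x : V) : RS.reflMap α x = x - RS.coroot α x • α := rfl

lemma reflMap_reflMap {α : V} (h2 : RS.coroot α α = 2) (x : V) :
    RS.reflMap α (RS.reflMap α x) = x := by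
  rw [reflMap_apply, reflMap_apply, map_sub, map_smul, smul_eq_mul, h2, sub_smul, mul_smul]
  have : (2 : ℚ) • α = α + α := two_smul ℚ α
  rw [this]
  rw [smul_add]
  abel

/-- The reflection `s_α` in a root `α`, as a linear automorphism of `V`. -/
def refl (α : V) (hα : α ∈ RS.roots) : V ≃ₗ[ℚ] V :=
  LinearEquiv.ofLinear (RS.reflMap α) (RS.reflMap α)
    (by ext x; exact RS.reflMap_reflMap (RS.coroot_self α hα) x)
    (by ext x; exact RS.reflMap_reflMap (RS.coroot_self α hα) x)

/-- The Weyl group of the root system: the subgroup of `GL(V)` generated by the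
reflections in the roots. -/
def weylGroup : Subgroup (V ≃ₗ[ℚ] V) :=
  Subgroup.closure {w | ∃ (α : V) (hα : α ∈ RS.roots), w = RS.refl α hα}

/-- A base (system of simple roots) of the root system: a linearly independent spanning
subset of `R` such that every root is a linear combination of base elements with integer
coefficients which are either all nonnegative or all nonpositive. -/
structure IsBase (Δ : Finset V) : Prop where
  subset : ↑Δ ⊆ RS.roots
  indep : LinearIndependent ℚ (fun x : (Δ : Set V) => (x : V))
  span_eq_top : Submodule.span ℚ (Δ : Set V) = ⊤
  pos_or_neg : ∀ β ∈ RS.roots,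
    (∃ f : V → ℕ, β = ∑ α ∈ Δ, (f α : ℚ) • α) ∨
    (∃ f : V → ℕ, β = -∑ α ∈ Δ, (f α : ℚ) • α)

/-- A Coxeter element of the Weyl group: a product of the reflections in the simple roots
of some base, each simple root occurring exactly once, in some order. -/
def IsCoxeterElement (c : V ≃ₗ[ℚ] V) : Prop :=
  ∃ (Δ : Finset V) (hΔ : RS.IsBase Δ) (l : List {x // x ∈ Δ}),
    l.Nodup ∧ (∀ α : {x // x ∈ Δ}, α ∈ l) ∧
    c = (l.map fun α => RS.refl α.1 (hΔ.subset α.2)).prod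

/-- Irreducibility of the root system: `R` admits no decomposition into two nonempty
mutually orthogonal subsets (orthogonality expressed via the coroot pairing). -/
def IsIrreducible : Prop :=
  ∀ R₁ R₂ : Set V, R₁ ∪ R₂ = RS.roots →
    (∀ α ∈ R₁, ∀ β ∈ R₂, RS.coroot α β = 0) → R₁ = ∅ ∨ R₂ = ∅

/-- The root lattice `Q`: the subgroup of `V` generated by the roots. -/
def rootLattice : AddSubgroup V := AddSubgroup.closure RS.roots

/-- The weight lattice `P = {x ∈ V : ⟨x, α^∨⟩ ∈ ℤ for every root α}`. -/
def weightLattice : AddSubgroup V where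
  carrier := {x : V | ∀ α ∈ RS.roots, ∃ n : ℤ, RS.coroot α x = (n : ℚ)}
  zero_mem' := fun α _ => ⟨0, by simp⟩
  add_mem' := by
    rintro x y hx hy α hα
    obtain ⟨n, hn⟩ := hx α hα
    obtain ⟨m, hm⟩ := hy α hα
    exact ⟨n + m, by rw [map_add, hn, hm]; push_cast; ring⟩
  neg_mem' := by
    rintro x hx α hα
    obtain ⟨n, hn⟩ := hx α hα
    exact ⟨-n, by rw [map_neg, hn]; push_cast; ring⟩

end RootSystemData

/-!
If `c = s_{α₁} ⋯ s_{αₙ}` fixes `x`, then `c x - x` lies in the span of the `αᵢ`; peeling off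
the reflections one at a time, linear independence of the simple roots forces `⟨x, αᵢ^∨⟩ = 0`
for every `i`. Averaging a positive definite form over the finite Weyl group gives an invariant
form `B` with `⟨x, α^∨⟩ B(α, α) = 2 B(α, x)`, so `B(α, x) = 0` for all simple roots `α`; these
span `V`, hence `B(x, x) = 0` and `x = 0`.
-/

section InvariantForm

variable {K V : Type*} [Field K] [LinearOrder K] [IsStrictOrderedRing K]
  [AddCommGroup V] [Module K V] [FiniteDimensional K V]

theorem exists_posDef_bilinForm :
    ∃ B : V →ₗ[K] V →ₗ[K] K, ∀ x, x ≠ 0 → 0 < B x x := by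
  let e := (Module.finBasis K V).equivFun
  refine ⟨(dotProductBilin K K).compl₁₂ e.toLinearMap e.toLinearMap, fun x hx => ?_⟩
  have hex : e x ≠ 0 := (LinearEquiv.map_ne_zero_iff e).mpr hx
  simp only [LinearMap.compl₁₂_apply, LinearEquiv.coe_coe, dotProductBilin_apply_apply]
  exact lt_of_le_of_ne (Finset.sum_nonneg fun i _ => mul_self_nonneg _)
    (Ne.symm (mt dotProduct_self_eq_zero.mp hex))

theorem Subgroup.exists_invariant_posDef_bilinForm (G : Subgroup (V ≃ₗ[K] V)) [Finite G] :
    ∃ B : V →ₗ[K] V →ₗ[K] K,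
      (∀ g ∈ G, ∀ x y, B (g x) (g y) = B x y) ∧ ∀ x, x ≠ 0 → 0 < B x x := by
  obtain ⟨B₀, hB₀⟩ := exists_posDef_bilinForm (K := K) (V := V)
  have := Fintype.ofFinite G
  refine ⟨∑ g : G, B₀.compl₁₂ (g : V →ₗ[K] V) (g : V →ₗ[K] V), fun s hs x y => ?_,
    fun x hx => ?_⟩
  · simp only [LinearMap.sum_apply, LinearMap.compl₁₂_apply, LinearEquiv.coe_coe]
    exact Fintype.sum_equiv (Equiv.mulRight ⟨s, hs⟩) _ _ fun g => rfl
  · simp only [LinearMap.sum_apply, LinearMap.compl₁₂_apply, LinearEquiv.coe_coe]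
    exact Finset.sum_pos (fun g _ => hB₀ _ ((LinearEquiv.map_ne_zero_iff _).mpr hx))
      Finset.univ_nonempty

end InvariantForm

theorem Subgroup.finite_of_forall_mapsTo {K V : Type*} [Semiring K] [AddCommMonoid V] [Module K V]
    {s : Set V} (hs : s.Finite) (hspan : Submodule.span K s = ⊤) (G : Subgroup (V ≃ₗ[K] V))
    (hG : ∀ g ∈ G, Set.MapsTo g s s) : Finite G := by
  have := hs.to_subtype
  refine Finite.of_injective (fun g : G => (hG g g.2).restrict) fun g h hgh => ?_
  refine Subtype.ext (LinearEquiv.toLinearMap_injective (LinearMap.ext_on hspan fun v hv => ?_))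
  exact congrArg Subtype.val (congrFun hgh ⟨v, hv⟩)

namespace RootSystemData

variable {V : Type*} [AddCommGroup V] [Module ℚ V] (RS : RootSystemData V)

lemma refl_apply {α : V} (hα : α ∈ RS.roots) (x : V) :
    RS.refl α hα x = x - RS.coroot α x • α := rfl

lemma refl_inv {α : V} (hα : α ∈ RS.roots) : (RS.refl α hα)⁻¹ = RS.refl α hα :=
  inv_eq_of_mul_eq_one_right <| LinearEquiv.ext <| RS.reflMap_reflMap (RS.coroot_self α hα)

lemma refl_mem_weylGroup {α : V} (hα : α ∈ RS.roots) : RS.refl α hα ∈ RS.weylGroup :=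
  Subgroup.subset_closure ⟨α, hα, rfl⟩

lemma mapsTo_roots_of_mem_weylGroup {g : V ≃ₗ[ℚ] V} (hg : g ∈ RS.weylGroup) :
    Set.MapsTo g RS.roots RS.roots := by
  induction hg using Subgroup.closure_induction'' with
  | mem _ h => obtain ⟨α, hα, rfl⟩ := h; exact RS.reflection_mem α hα
  | inv_mem _ h => obtain ⟨α, hα, rfl⟩ := h; rw [refl_inv]; exact RS.reflection_mem α hα
  | one => exact Set.mapsTo_id _
  | mul _ _ _ _ hg hh => exact hg.comp hh

instance finite_weylGroup : Finite RS.weylGroup :=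
  RS.weylGroup.finite_of_forall_mapsTo RS.finite RS.span_eq_top
    fun _ => RS.mapsTo_roots_of_mem_weylGroup

lemma coroot_apply_mul_eq_two_mul_of_invariant (B : V →ₗ[ℚ] V →ₗ[ℚ] ℚ) {α : V}
    (hα : α ∈ RS.roots) (hB : ∀ x y, B (RS.refl α hα x) (RS.refl α hα y) = B x y) (v : V) :
    RS.coroot α v * B α α = 2 * B α v := by
  have h := hB α v
  rw [refl_apply, refl_apply, RS.coroot_self α hα] at h
  simp only [map_sub, map_smul, LinearMap.sub_apply, LinearMap.smul_apply, smul_eq_mul] at h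
  linear_combination h

lemma eq_zero_of_forall_coroot_eq_zero [FiniteDimensional ℚ V] {s : Set V}
    (hs : s ⊆ RS.roots) (hspan : Submodule.span ℚ s = ⊤) {x : V}
    (hx : ∀ α ∈ s, RS.coroot α x = 0) : x = 0 := by
  obtain ⟨B, hinv, hpos⟩ := RS.weylGroup.exists_invariant_posDef_bilinForm
  have hBx : B.flip x = 0 := LinearMap.ext_on hspan fun α hα => by
    have h := RS.coroot_apply_mul_eq_two_mul_of_invariant B (hs hα)
      (hinv _ (RS.refl_mem_weylGroup (hs hα))) x
    rw [hx α hα, zero_mul] at h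
    simpa using h.symm
  by_contra hne
  exact (hpos x hne).ne' (LinearMap.congr_fun hBx x)

variable {ι : Type*} (v : ι → V) (hv : ∀ i, v i ∈ RS.roots)

lemma list_prod_refl_apply_sub_mem_span (l : List ι) (x : V) :
    (l.map fun i => RS.refl (v i) (hv i)).prod x - x ∈ Submodule.span ℚ (v '' {i | i ∈ l}) := by
  induction l with
  | nil => simp
  | cons a l ih =>
    set P := (l.map fun i => RS.refl (v i) (hv i)).prod
    have hstep : ((a :: l).map fun i => RS.refl (v i) (hv i)).prod x - x =
        (P x - x) - RS.coroot (v a) (P x) • v a := by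
      rw [List.map_cons, List.prod_cons, LinearEquiv.mul_apply, refl_apply]
      abel
    rw [hstep]
    refine sub_mem (Submodule.span_mono (Set.image_mono fun i hi => ?_) ih)
      (Submodule.smul_mem _ _ (Submodule.subset_span ⟨a, List.mem_cons_self, rfl⟩))
    exact List.mem_cons_of_mem a hi

lemma coroot_eq_zero_of_list_prod_refl_apply_eq {l : List ι} (hl : l.Nodup)
    (hli : LinearIndepOn ℚ v {i | i ∈ l}) {x : V}
    (hx : (l.map fun i => RS.refl (v i) (hv i)).prod x = x) :
    ∀ i ∈ l, RS.coroot (v i) x = 0 := by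
  induction l with
  | nil => simp
  | cons a l ih =>
    rw [List.nodup_cons] at hl
    rw [List.setOfPred_mem_cons, linearIndepOn_insert (s := {i | i ∈ l}) hl.1] at hli
    set P := (l.map fun i => RS.refl (v i) (hv i)).prod
    have hPx : P x - x = RS.coroot (v a) (P x) • v a := by
      rw [List.map_cons, List.prod_cons, LinearEquiv.mul_apply, refl_apply] at hx
      linear_combination (norm := module) hx
    have hPa : RS.coroot (v a) (P x) = 0 := by
      by_contra hne
      have h := RS.list_prod_refl_apply_sub_mem_span v hv l x
      rw [hPx, Submodule.smul_mem_iff _ hne] at h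
      exact hli.2 h
    have hPfix : P x = x := by rw [← sub_eq_zero, hPx, hPa, zero_smul]
    rintro i (_ | ⟨_, hi⟩)
    · rwa [hPfix] at hPa
    · exact ih hl.2 hli.1 hPfix i hi

end RootSystemData

/-- Every Coxeter element `c` of the Weyl group `W` has no nonzero fixed
vector in `V`: `ker (c - id_V) = {0}`. -/
theorem RootSystemData.ker_coxeterElement_sub_id_eq_bot
    {V : Type*} [AddCommGroup V] [Module ℚ V] [FiniteDimensional ℚ V]
    (RS : RootSystemData V) (c : V ≃ₗ[ℚ] V) (hc : RS.IsCoxeterElement c) :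
    LinearMap.ker ((c : V →ₗ[ℚ] V) - LinearMap.id) = ⊥ := by
  obtain ⟨Δ, hΔ, l, hnd, hall, rfl⟩ := hc
  refine LinearMap.ker_eq_bot'.mpr fun x hx => ?_
  have hfix : (l.map fun α => RS.refl α.1 (hΔ.subset α.2)).prod x = x := sub_eq_zero.mp hx
  have hcoroot := RS.coroot_eq_zero_of_list_prod_refl_apply_eq Subtype.val _ hnd
    ((linearIndepOn_univ_iff.mpr hΔ.indep).mono (Set.subset_univ _)) hfix
  exact RS.eq_zero_of_forall_coroot_eq_zero hΔ.subset hΔ.span_eq_top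
    fun α hα => hcoroot ⟨α, hα⟩ (hall _)
end

section
/- Assume R is irreducible and let c be a Coxeter element of W. Then the linear map id_V − c restricts to a bijection from the weight lattice P onto the root lattice Q; in particular, for every q ∈ Q there exists a unique p ∈ P with q = p − c(p). -/
open Module

/-!
Write `c = s₁ ⋯ sₙ` with `sₖ` the reflection in the simple root `αₖ`. If `c x = x`, then
`⟨y, α₁^∨⟩ α₁ = y - x ∈ span {α₂, …, αₙ}` for `y = s₂ ⋯ sₙ x`, so `y = x` and
`⟨x, α₁^∨⟩ = 0`; inductively every simple coroot kills `x`, hence `x = 0` and `id - c` is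
injective. For the fundamental weight `ωₖ` only `sₖ` moves `ωₖ`, so
`ωₖ - c ωₖ = s₁ ⋯ sₖ₋₁ αₖ ∈ αₖ + ℤα₁ + ⋯ + ℤαₖ₋₁`. This system is unitriangular, so the image
of `P` contains every simple root, hence `Q`. Finally `ωₖ ∈ P` because every coroot is an
integral combination of simple coroots.
-/

theorem List.forall_mem_of_forall_prefix {α : Type*} {p : α → Prop} {l : List α}
    (h : ∀ pre a suf, l = pre ++ a :: suf → (∀ b ∈ pre, p b) → p a) : ∀ a ∈ l, p a := by
  induction l using List.reverseRecOn with
  | nil => simp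
  | append_singleton l a ih =>
    have hl : ∀ b ∈ l, p b := ih fun pre b suf hpre => h pre b (suf ++ [a]) (by simp [hpre])
    intro b hb
    rcases List.mem_append.mp hb with hb | hb
    · exact hl b hb
    · rw [List.mem_singleton.mp hb]; exact h l a [] rfl hl

theorem Set.BijOn.existsUnique_eq {α β : Type*} {f : α → β} {s : Set α} {t : Set β}
    (h : Set.BijOn f s t) {b : β} (hb : b ∈ t) : ∃! a, a ∈ s ∧ b = f a := by
  obtain ⟨a, ha, rfl⟩ := h.surjOn hb
  exact ⟨a, ⟨ha, rfl⟩, fun a' ⟨ha', he⟩ => h.injOn ha' ha he.symm⟩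

namespace RootSystemData

variable {V : Type*} [AddCommGroup V] [Module ℚ V] (RS : RootSystemData V)

lemma coroot_injOn : Set.InjOn RS.coroot RS.roots := by
  intro α hα β hβ hαβ
  by_contra hne
  have hαα : RS.coroot α α = 2 := RS.coroot_self α hα
  have hαβ' : RS.coroot α β = 2 := hαβ ▸ RS.coroot_self β hβ
  -- `s_α s_β` is the transvection `x ↦ x + ⟨x, α^∨⟩ (α - β)`, of infinite order
  have hmem : ∀ n : ℕ, α + (2 * n : ℚ) • (α - β) ∈ RS.roots := by
    intro n
    induction n with
    | zero => simpa using hα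
    | succ n ih =>
      convert RS.reflection_mem α hα _ (RS.reflection_mem β hβ _ ih) using 1
      simp only [← hαβ, map_add, map_sub, map_smul, hαα, hαβ', smul_eq_mul]
      push_cast
      module
  refine (Set.infinite_of_injective_forall_mem (fun m n hmn => ?_) hmem) RS.finite
  have : ((2 * m : ℚ) - 2 * n) • (α - β) = 0 := by
    rw [sub_smul]; exact sub_eq_zero.mpr (add_left_cancel hmn)
  rcases smul_eq_zero.mp this with h | h
  · exact_mod_cast (by linarith : (m : ℚ) = n)
  · exact absurd (sub_eq_zero.mp h) hne

instance : Finite RS.roots := RS.finite.to_subtype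

lemma rootLattice_le_weightLattice : RS.rootLattice ≤ RS.weightLattice :=
  (AddSubgroup.closure_le _).mpr fun β hβ α hα => RS.crystallographic α hα β hβ

lemma exists_reflMap_eq_sub_zsmul {α p : V} (hα : α ∈ RS.roots) (hp : p ∈ RS.weightLattice) :
    ∃ n : ℤ, RS.reflMap α p = p - n • α := by
  obtain ⟨n, hn⟩ := hp α hα
  exact ⟨n, by rw [reflMap_apply, hn, Int.cast_smul_eq_zsmul]⟩

def reflProd (t : List V) : Module.End ℚ V := (t.map RS.reflMap).prod

lemma reflProd_cons (α : V) (t : List V) :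
    RS.reflProd (α :: t) = RS.reflMap α * RS.reflProd t := List.prod_cons

lemma reflProd_append (s t : List V) :
    RS.reflProd (s ++ t) = RS.reflProd s * RS.reflProd t := by
  simp [reflProd]

lemma reflProd_apply_of_coroot_eq_zero {t : List V} {x : V}
    (hx : ∀ α ∈ t, RS.coroot α x = 0) : RS.reflProd t x = x := by
  induction t with
  | nil => rfl
  | cons α t ih =>
    rw [reflProd_cons, Module.End.mul_apply, ih fun β hβ => hx β (List.mem_cons_of_mem α hβ),
      reflMap_apply, hx α List.mem_cons_self, zero_smul, sub_zero]

lemma reflProd_sub_self_mem_span (t : List V) (x : V) :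
    RS.reflProd t x - x ∈ Submodule.span ℚ {α | α ∈ t} := by
  induction t with
  | nil => simp [reflProd]
  | cons α t ih =>
    rw [reflProd_cons, Module.End.mul_apply, reflMap_apply, sub_right_comm]
    exact sub_mem (Submodule.span_mono (fun β hβ => List.mem_cons_of_mem α hβ) ih)
      (Submodule.smul_mem _ _ (Submodule.subset_span List.mem_cons_self))

lemma reflProd_sub_self_mem_closure {t : List V} (ht : ∀ α ∈ t, α ∈ RS.roots) {p : V}
    (hp : p ∈ RS.weightLattice) : RS.reflProd t p - p ∈ AddSubgroup.closure {α | α ∈ t} := by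
  induction t with
  | nil => simp [reflProd]
  | cons α t ih =>
    have ih := ih fun β hβ => ht β (List.mem_cons_of_mem α hβ)
    have hclosure : AddSubgroup.closure {β | β ∈ t} ≤ RS.weightLattice :=
      ((AddSubgroup.closure_le _).mpr fun β hβ => AddSubgroup.subset_closure
        (ht β (List.mem_cons_of_mem α hβ))).trans RS.rootLattice_le_weightLattice
    obtain ⟨n, hn⟩ := RS.exists_reflMap_eq_sub_zsmul (ht α List.mem_cons_self)
      (by simpa using add_mem (hclosure ih) hp)
    rw [reflProd_cons, Module.End.mul_apply, hn, sub_right_comm]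
    exact sub_mem (AddSubgroup.closure_mono (fun β hβ => List.mem_cons_of_mem α hβ) ih)
      (zsmul_mem (AddSubgroup.subset_closure (k := {β | β ∈ α :: t}) List.mem_cons_self) n)

lemma coroot_eq_zero_of_reflProd_apply_eq {t : List V} (hnd : t.Nodup)
    (hli : LinearIndepOn ℚ id {α | α ∈ t}) {x : V} (hx : RS.reflProd t x = x) :
    ∀ α ∈ t, RS.coroot α x = 0 := by
  induction t generalizing x with
  | nil => simp
  | cons α t ih =>
    obtain ⟨hαt, hnd⟩ := List.nodup_cons.mp hnd
    have hα : α ∉ Submodule.span ℚ {β | β ∈ t} := by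
      have hli : LinearIndepOn ℚ id (insert α {β | β ∈ t}) := by
        convert hli using 1; ext; simp
      simpa using hli.notMem_span_of_insert hαt
    set y := RS.reflProd t x
    rw [reflProd_cons, Module.End.mul_apply, reflMap_apply] at hx
    have hy : RS.coroot α y = 0 := by
      by_contra hne
      refine hα ((Submodule.smul_mem_iff _ hne).mp ?_)
      rw [show RS.coroot α y • α = y - x by rw [← hx]; abel]
      exact RS.reflProd_sub_self_mem_span t x
    rw [hy, zero_smul, sub_zero] at hx
    intro β hβ
    rcases List.mem_cons.mp hβ with rfl | hβ
    · rwa [← hx]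
    · exact ih hnd (hli.mono fun β hβ => List.mem_cons_of_mem α hβ) hx β hβ

lemma sub_reflProd_append_cons {pre suf : List V} {α ω : V} (hα : RS.coroot α ω = 1)
    (hpre : ∀ β ∈ pre, RS.coroot β ω = 0) (hsuf : ∀ β ∈ suf, RS.coroot β ω = 0) :
    ω - RS.reflProd (pre ++ α :: suf) ω = RS.reflProd pre α := by
  rw [reflProd_append, reflProd_cons, Module.End.mul_apply, Module.End.mul_apply,
    RS.reflProd_apply_of_coroot_eq_zero hsuf, reflMap_apply, hα, one_smul, map_sub,
    RS.reflProd_apply_of_coroot_eq_zero hpre, sub_sub_cancel]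

variable {RS} {Δ : Finset V}

lemma mapsTo_sub_reflProd {t : List V} (ht : ∀ α ∈ t, α ∈ RS.roots) :
    Set.MapsTo (fun x => x - RS.reflProd t x) RS.weightLattice RS.rootLattice := by
  intro p hp
  have hle : AddSubgroup.closure {α | α ∈ t} ≤ RS.rootLattice :=
    AddSubgroup.closure_mono ht
  simpa using neg_mem (hle (RS.reflProd_sub_self_mem_closure ht hp))

lemma IsCoxeterElement.exists_reflProd {c : V ≃ₗ[ℚ] V} (hc : RS.IsCoxeterElement c) :
    ∃ Δ, RS.IsBase Δ ∧ ∃ t : List V, t.Nodup ∧ (∀ α, α ∈ t ↔ α ∈ Δ) ∧ ⇑c = RS.reflProd t := by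
  obtain ⟨Δ, hΔ, l, hnd, hall, rfl⟩ := hc
  refine ⟨Δ, hΔ, l.map Subtype.val, hnd.map Subtype.val_injective,
    fun α => ⟨fun h => ?_, fun h => List.mem_map_of_mem (hall ⟨α, h⟩)⟩, ?_⟩
  · obtain ⟨a, -, rfl⟩ := List.mem_map.mp h
    exact a.2
  · clear hnd hall
    induction l with
    | nil => rfl
    | cons a l ih =>
      ext x
      rw [List.map_cons, List.prod_cons, List.map_cons, reflProd_cons, Module.End.mul_apply, ← ih]
      rfl

lemma IsBase.mem_closure_or_neg_mem_closure (hΔ : RS.IsBase Δ) {β : V} (hβ : β ∈ RS.roots) :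
    β ∈ AddSubmonoid.closure (Δ : Set V) ∨ -β ∈ AddSubmonoid.closure (Δ : Set V) := by
  have hsum (f : V → ℕ) : ∑ α ∈ Δ, (f α : ℚ) • α ∈ AddSubmonoid.closure (Δ : Set V) :=
    sum_mem fun α hα => by
      rw [Nat.cast_smul_eq_nsmul]; exact nsmul_mem (AddSubmonoid.subset_closure hα) _
  rcases hΔ.pos_or_neg β hβ with ⟨f, rfl⟩ | ⟨f, rfl⟩
  · exact .inl (hsum f)
  · exact .inr (by simpa using hsum f)

lemma IsBase.rootLattice_le (hΔ : RS.IsBase Δ) {H : AddSubgroup V} (hH : (Δ : Set V) ⊆ H) :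
    RS.rootLattice ≤ H := by
  have hle : AddSubmonoid.closure (Δ : Set V) ≤ H.toAddSubmonoid := AddSubmonoid.closure_le.mpr hH
  refine (AddSubgroup.closure_le _).mpr fun β hβ => ?_
  rcases hΔ.mem_closure_or_neg_mem_closure hβ with h | h
  · exact hle h
  · simpa using H.neg_mem (hle h)

lemma IsBase.image_val (hΔ : RS.IsBase Δ) : Subtype.val '' {α : RS.roots | α.1 ∈ Δ} = Δ := by
  ext x
  exact ⟨fun ⟨α, hα, h⟩ => h ▸ hα, fun hx => ⟨⟨x, hΔ.subset hx⟩, hx, rfl⟩⟩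

section FiniteDimensional

variable (RS) [FiniteDimensional ℚ V]

noncomputable def toRootPairing : RootPairing RS.roots ℚ V (Dual ℚ V) :=
  RootPairing.mk'' (Dual.eval ℚ V) (Function.Embedding.subtype _)
    ⟨fun α => RS.coroot α, fun α β h => Subtype.ext (RS.coroot_injOn α.2 β.2 h)⟩
    (fun α => RS.coroot_self α α.2)
    (by
      rintro α - ⟨β, rfl⟩
      exact ⟨⟨_, RS.reflection_mem α α.2 β β.2⟩, rfl⟩)
    (by simpa using RS.span_eq_top)

lemma toRootPairing_root : ⇑RS.toRootPairing.root = Subtype.val := rfl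

@[simp] lemma toRootPairing_pairing (α β : RS.roots) :
    RS.toRootPairing.pairing α β = RS.coroot β α := rfl

instance : RS.toRootPairing.IsCrystallographic where
  exists_value α β := by
    obtain ⟨n, hn⟩ := RS.crystallographic β β.2 α α.2
    exact ⟨n, by simp [hn]⟩

instance : RS.toRootPairing.IsRootSystem :=
  RootPairing.isRootSystem_mk'' fun α β => by
    obtain ⟨n, hn⟩ := RS.crystallographic β β.2 α α.2
    exact ⟨n, hn.symm⟩

instance : RS.toRootPairing.IsReduced where
  eq_or_eq_neg α β h := by
    rw [LinearIndependent.pair_iff' (RS.toRootPairing.ne_zero α)] at h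
    push Not at h
    obtain ⟨t, ht⟩ := h
    simp only [toRootPairing_root] at ht ⊢
    rcases RS.reduced α α.2 t (ht ▸ β.2) with rfl | rfl
    · simp [← ht]
    · simp [← ht]

variable {RS}

noncomputable def IsBase.toBase (hΔ : RS.IsBase Δ) : RS.toRootPairing.Base :=
  RootPairing.Base.mk' _ {α | α.1 ∈ Δ}
    ((linearIndepOn_iff_image (f := RS.toRootPairing.root) Subtype.val_injective.injOn).mpr
      (by rw [toRootPairing_root, hΔ.image_val]; exact hΔ.indep))
    (fun α => by
      rw [toRootPairing_root, hΔ.image_val]; exact hΔ.mem_closure_or_neg_mem_closure α.2)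

lemma IsBase.image_coroot_toBase_support (hΔ : RS.IsBase Δ) :
    RS.toRootPairing.coroot '' hΔ.toBase.support = RS.coroot '' Δ := by
  have hsupp : (hΔ.toBase.support : Set RS.roots) = {α | α.1 ∈ Δ} := by
    simp [IsBase.toBase, RootPairing.Base.mk']
  rw [hsupp, ← hΔ.image_val, Set.image_image]
  rfl

lemma IsBase.coroot_mem_span_int (hΔ : RS.IsBase Δ) {β : V} (hβ : β ∈ RS.roots) :
    RS.coroot β ∈ Submodule.span ℤ (RS.coroot '' Δ) :=
  hΔ.image_coroot_toBase_support ▸ hΔ.toBase.coroot_mem_span_int ⟨β, hβ⟩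

lemma IsBase.span_coroot_eq_top (hΔ : RS.IsBase Δ) :
    Submodule.span ℚ (RS.coroot '' Δ) = ⊤ := by
  rw [← hΔ.image_coroot_toBase_support, hΔ.toBase.span_coroot_support]
  exact RootPairing.IsRootSystem.span_coroot_eq_top

lemma IsBase.eq_zero_of_coroot_eq_zero (hΔ : RS.IsBase Δ) {x : V}
    (hx : ∀ α ∈ Δ, RS.coroot α x = 0) : x = 0 := by
  have hle : Submodule.span ℚ (RS.coroot '' Δ) ≤ LinearMap.ker (Dual.eval ℚ V x) :=
    Submodule.span_le.mpr (by rintro _ ⟨α, hα, rfl⟩; exact hx α hα)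
  rw [hΔ.span_coroot_eq_top] at hle
  exact (Module.forall_dual_apply_eq_zero_iff ℚ x).mp fun f => hle Submodule.mem_top

lemma IsBase.mem_weightLattice (hΔ : RS.IsBase Δ) {x : V}
    (hx : ∀ α ∈ Δ, ∃ n : ℤ, RS.coroot α x = n) : x ∈ RS.weightLattice := by
  suffices ∀ f ∈ Submodule.span ℤ (RS.coroot '' Δ), ∃ n : ℤ, f x = n from
    fun β hβ => this _ (hΔ.coroot_mem_span_int hβ)
  intro f hf
  induction hf using Submodule.span_induction with
  | mem f hf => obtain ⟨α, hα, rfl⟩ := hf; exact hx α hα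
  | zero => exact ⟨0, by simp⟩
  | add f g _ _ hf hg =>
    obtain ⟨m, hm⟩ := hf
    obtain ⟨n, hn⟩ := hg
    exact ⟨m + n, by simp [hm, hn]⟩
  | smul k f _ hf =>
    obtain ⟨m, hm⟩ := hf
    exact ⟨k * m, by simp [hm]⟩

lemma IsBase.surjective_pi_coroot (hΔ : RS.IsBase Δ) :
    Function.Surjective (LinearMap.pi fun α : Δ => RS.coroot α) := by
  refine (LinearMap.injective_iff_surjective_of_finrank_eq_finrank ?_).mp ?_
  · rw [Module.finrank_fintype_fun_eq_card, Fintype.card_coe, ← finrank_top ℚ V,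
      ← hΔ.span_eq_top, finrank_span_finset_eq_card hΔ.indep]
  · refine (injective_iff_map_eq_zero _).mpr fun x hx =>
      hΔ.eq_zero_of_coroot_eq_zero fun α hα => congr_fun hx ⟨α, hα⟩

lemma IsBase.exists_fundamentalWeight (hΔ : RS.IsBase Δ) {α : V} (hα : α ∈ Δ) :
    ∃ ω ∈ RS.weightLattice, RS.coroot α ω = 1 ∧ ∀ β ∈ Δ, β ≠ α → RS.coroot β ω = 0 := by
  classical
  obtain ⟨ω, hω⟩ := hΔ.surjective_pi_coroot (Pi.single ⟨α, hα⟩ 1)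
  have hω' (β : V) (hβ : β ∈ Δ) : RS.coroot β ω = if β = α then 1 else 0 := by
    simpa [Pi.single_apply] using congr_fun hω ⟨β, hβ⟩
  refine ⟨ω, hΔ.mem_weightLattice fun β hβ => ?_, by simpa using hω' α hα,
    fun β hβ hne => by simpa [hne] using hω' β hβ⟩
  rw [hω' β hβ]
  split_ifs
  exacts [⟨1, by simp⟩, ⟨0, by simp⟩]

variable {t : List V}

lemma IsBase.injective_sub_reflProd (hΔ : RS.IsBase Δ) (hnd : t.Nodup)
    (ht : ∀ α, α ∈ t ↔ α ∈ Δ) : Function.Injective fun x => x - RS.reflProd t x := by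
  intro x y hxy
  have hfix : RS.reflProd t (x - y) = x - y := by
    rw [map_sub]; exact (sub_eq_sub_iff_sub_eq_sub.mp hxy).symm
  have hli : LinearIndepOn ℚ id {α | α ∈ t} := by
    rw [show {α | α ∈ t} = (Δ : Set V) from Set.ext ht]; exact hΔ.indep
  have := RS.coroot_eq_zero_of_reflProd_apply_eq hnd hli hfix
  exact sub_eq_zero.mp (hΔ.eq_zero_of_coroot_eq_zero fun α hα => this α ((ht α).mpr hα))

lemma IsBase.surjOn_sub_reflProd (hΔ : RS.IsBase Δ) (hnd : t.Nodup)
    (ht : ∀ α, α ∈ t ↔ α ∈ Δ) :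
    Set.SurjOn (fun x => x - RS.reflProd t x) RS.weightLattice RS.rootLattice := by
  let H := RS.weightLattice.map (LinearMap.id - RS.reflProd t).toAddMonoidHom
  suffices RS.rootLattice ≤ H by
    intro q hq
    obtain ⟨p, hp, rfl⟩ := AddSubgroup.mem_map.mp (this hq)
    exact ⟨p, hp, rfl⟩
  refine hΔ.rootLattice_le fun γ hγ => List.forall_mem_of_forall_prefix (p := (· ∈ H))
    (fun pre α suf hsplit hpre => ?_) γ ((ht γ).mpr hγ)
  subst hsplit
  have hroot (β : V) (hβ : β ∈ pre ++ α :: suf) : β ∈ RS.roots := hΔ.subset ((ht β).mp hβ)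
  obtain ⟨hαpresuf, -⟩ := List.nodup_cons.mp (List.nodup_middle.mp hnd)
  obtain ⟨ω, hωP, hωα, hω⟩ := hΔ.exists_fundamentalWeight ((ht α).mp (by simp))
  have hvanish (β : V) (hβ : β ∈ pre ++ suf) : RS.coroot β ω = 0 :=
    hω β ((ht β).mp (by simp at hβ ⊢; tauto)) (ne_of_mem_of_not_mem hβ hαpresuf)
  have hωH : RS.reflProd pre α ∈ H := by
    rw [← RS.sub_reflProd_append_cons hωα (fun β hβ => hvanish β (List.mem_append_left _ hβ))
      (fun β hβ => hvanish β (List.mem_append_right _ hβ))]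
    exact AddSubgroup.mem_map_of_mem _ hωP
  have hαP : α ∈ RS.weightLattice :=
    RS.rootLattice_le_weightLattice (AddSubgroup.subset_closure (hroot α (by simp)))
  have hpreH : RS.reflProd pre α - α ∈ H :=
    (AddSubgroup.closure_le H).mpr hpre
      (RS.reflProd_sub_self_mem_closure (fun β hβ => hroot β (by simp [hβ])) hαP)
  simpa using sub_mem hωH hpreH

lemma IsBase.bijOn_sub_reflProd (hΔ : RS.IsBase Δ) (hnd : t.Nodup)
    (ht : ∀ α, α ∈ t ↔ α ∈ Δ) :
    Set.BijOn (fun x => x - RS.reflProd t x) RS.weightLattice RS.rootLattice :=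
  ⟨mapsTo_sub_reflProd fun α hα => hΔ.subset ((ht α).mp hα),
    (hΔ.injective_sub_reflProd hnd ht).injOn, hΔ.surjOn_sub_reflProd hnd ht⟩

end FiniteDimensional

end RootSystemData

theorem RootSystemData.bijOn_id_sub_coxeterElement_general
    {V : Type*} [AddCommGroup V] [Module ℚ V] [FiniteDimensional ℚ V]
    (RS : RootSystemData V)
    (c : V ≃ₗ[ℚ] V) (hc : RS.IsCoxeterElement c) :
    Set.BijOn (fun x : V => x - c x) (RS.weightLattice : Set V) (RS.rootLattice : Set V) ∧
    ∀ q ∈ RS.rootLattice, ∃! p, p ∈ RS.weightLattice ∧ q = p - c p := by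
  obtain ⟨Δ, hΔ, t, hnd, ht, hct⟩ := hc.exists_reflProd
  have hbij : Set.BijOn (fun x : V => x - c x) RS.weightLattice RS.rootLattice := by
    simpa only [hct] using hΔ.bijOn_sub_reflProd hnd ht
  exact ⟨hbij, fun q hq => hbij.existsUnique_eq hq⟩

/-- Assume the root system is irreducible and let `c` be a Coxeter
element of the Weyl group.  Then `id_V - c` restricts to a bijection from the weight
lattice `P` onto the root lattice `Q`; in particular every `q ∈ Q` is of the form
`q = p - c(p)` for a unique `p ∈ P`. -/
theorem RootSystemData.bijOn_id_sub_coxeterElement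
    {V : Type*} [AddCommGroup V] [Module ℚ V] [FiniteDimensional ℚ V]
    (RS : RootSystemData V) (hirr : RS.IsIrreducible)
    (c : V ≃ₗ[ℚ] V) (hc : RS.IsCoxeterElement c) :
    Set.BijOn (fun x : V => x - c x) (RS.weightLattice : Set V) (RS.rootLattice : Set V) ∧
    ∀ q ∈ RS.rootLattice, ∃! p, p ∈ RS.weightLattice ∧ q = p - c p :=
  RootSystemData.bijOn_id_sub_coxeterElement_general RS c hc
end

section
/- Let h and n be positive integers and let M be an n×n integer matrix with M^h = 1. Let K be a field whose characteristic does not divide h and which contains a primitive h-th root of unity ζ, and let m be an integer. Then the dimension over K of the kernel of (M − ζ^m·id) acting on K^n equals the dimension over ℂ of the kernel of (M − exp(2πim/h)·id) acting on ℂ^n. -/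
/-!
As `M ^ h = 1` and `h` is invertible in the field, `M` is semisimple there, so for an `h`-th
root of unity `a` the kernel of `M - a` has dimension the multiplicity of `a` as a root of the
characteristic polynomial `χ` of `M`. Over `ℤ`, `χ` divides `(X ^ h - 1) ^ n`, because `det (X - M)` divides
`det (X ^ h - M ^ h)`. Among the cyclotomic factors `Φ_d` (`d ∣ h`) of the separable polynomial
`X ^ h - 1`, only `Φ_(orderOf a)` vanishes at `a`, and only simply; hence that multiplicity is the
multiplicity of `Φ_(orderOf a)` in `χ`, which does not depend on the field. Finally `ζ ^ m` and
`exp (2πim/h)` have the same order.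
-/

open Module Polynomial

theorem Matrix.charpoly_dvd_X_pow_sub_one_pow {R ι : Type*} [CommRing R] [Fintype ι]
    [DecidableEq ι] {M : Matrix ι ι R} {h : ℕ} (hM : M ^ h = 1) :
    M.charpoly ∣ (X ^ h - 1) ^ Fintype.card ι := by
  have hcomm : Commute (scalar ι (X : R[X])) (C.mapMatrix M) :=
    scalar_commute _ (commute_X ·) _
  obtain ⟨B, hB⟩ : ∃ B, B * M.charmatrix = scalar ι ((X : R[X]) ^ h - 1) :=
    ⟨_, by
      rw [charmatrix, hcomm.geom_sum₂_mul, ← map_pow, ← map_pow, hM, map_one, map_sub,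
        map_one]⟩
  refine ⟨B.det, ?_⟩
  rw [charpoly, mul_comm, ← det_mul, hB, scalar_apply, det_diagonal, Finset.prod_const,
    Finset.card_univ]

theorem Polynomial.rootMultiplicity_pow {R : Type*} [CommRing R] [IsDomain R] (p : R[X])
    (a : R) (n : ℕ) : rootMultiplicity a (p ^ n) = n * rootMultiplicity a p := by
  classical
  rw [← count_roots, roots_pow, Multiset.count_nsmul, count_roots]

theorem IsPrimitiveRoot.orderOf_zpow_eq {G H : Type*} [DivisionCommMonoid G]
    [DivisionCommMonoid H] {ζ : G} {ξ : H} {k : ℕ} (hζ : IsPrimitiveRoot ζ k)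
    (hξ : IsPrimitiveRoot ξ k) (m : ℤ) : orderOf (ζ ^ m) = orderOf (ξ ^ m) :=
  orderOf_eq_orderOf_iff.mpr fun n => by
    rw [← zpow_natCast, ← zpow_mul, ← zpow_natCast, ← zpow_mul, hζ.zpow_eq_one_iff_dvd,
      hξ.zpow_eq_one_iff_dvd]

theorem IsPrimitiveRoot.zpow_pow_eq_one {G : Type*} [DivisionCommMonoid G] {ζ : G} {k : ℕ}
    (hζ : IsPrimitiveRoot ζ k) (m : ℤ) : (ζ ^ m) ^ k = 1 := by
  rw [← zpow_natCast, ← zpow_mul, hζ.zpow_eq_one_iff_dvd]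
  exact dvd_mul_left _ _

theorem Module.End.finrank_eigenspace_eq_rootMultiplicity_of_pow_eq_one {F V : Type*} [Field F]
    [AddCommGroup V] [Module F V] [FiniteDimensional F V] {f : End F V} {h : ℕ}
    (hf : f ^ h = 1) (hF : (h : F) ≠ 0) (μ : F) :
    finrank F (f.eigenspace μ) = rootMultiplicity μ f.charpoly := by
  have hss : f.IsSemisimple :=
    isSemisimple_of_squarefree_aeval_eq_zero (X_pow_sub_one_separable_iff.mpr hF).squarefree
      (by simp [hf])
  rw [← hss.isFinitelySemisimple.maxGenEigenspace_eq_eigenspace,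
    LinearMap.finrank_maxGenEigenspace_eq]

theorem Matrix.finrank_ker_sub_smul_one_eq_rootMultiplicity {F ι : Type*} [Field F] [Fintype ι]
    [DecidableEq ι] {A : Matrix ι ι F} {h : ℕ} (hA : A ^ h = 1) (hF : (h : F) ≠ 0) (μ : F) :
    finrank F (LinearMap.ker (A - μ • 1).mulVecLin) = rootMultiplicity μ A.charpoly := by
  have hpow : A.mulVecLin ^ h = 1 := by
    show toLinAlgEquiv' A ^ h = 1
    rw [← map_pow, hA, map_one]
  rw [← charpoly_mulVecLin,
    ← Module.End.finrank_eigenspace_eq_rootMultiplicity_of_pow_eq_one hpow hF,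
    Module.End.eigenspace_def, ← toLin'_apply', ← toLin'_apply', map_sub, map_smul, toLin'_one,
    Module.End.one_eq_id]

section RootsOfUnity

variable {F : Type*} [Field F] {h : ℕ} {a : F}

theorem cyclotomic_orderOf_dvd_X_pow_sub_one (ha : a ^ h = 1) :
    cyclotomic (orderOf a) ℤ ∣ X ^ h - 1 := by
  obtain ⟨e, rfl⟩ := orderOf_dvd_of_pow_eq_one ha
  exact (cyclotomic.dvd_X_pow_sub_one _ ℤ).trans (pow_one_sub_dvd_pow_mul_sub_one X _ e)

theorem natCast_orderOf_ne_zero (ha : a ^ h = 1) (hF : (h : F) ≠ 0) :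
    (orderOf a : F) ≠ 0 := by
  obtain ⟨e, he⟩ := orderOf_dvd_of_pow_eq_one ha
  exact fun h0 => hF (by rw [he, Nat.cast_mul, h0, zero_mul])

theorem orderOf_pos_of_natCast_ne_zero (ha : a ^ h = 1) (hF : (h : F) ≠ 0) : 0 < orderOf a :=
  Nat.pos_of_ne_zero fun h0 => natCast_orderOf_ne_zero ha hF (by rw [h0, Nat.cast_zero])

theorem rootMultiplicity_cyclotomic_orderOf (ha : a ^ h = 1) (hF : (h : F) ≠ 0) :
    rootMultiplicity a (cyclotomic (orderOf a) F) = 1 := by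
  have : NeZero (orderOf a : F) := ⟨natCast_orderOf_ne_zero ha hF⟩
  refine le_antisymm (rootMultiplicity_le_one_of_separable (separable_cyclotomic _ F) a) ?_
  exact (rootMultiplicity_pos (cyclotomic_ne_zero _ F)).mpr
    ((IsPrimitiveRoot.orderOf a).isRoot_cyclotomic (orderOf_pos_of_natCast_ne_zero ha hF))

theorem not_isRoot_map_of_not_cyclotomic_orderOf_dvd (ha : a ^ h = 1) (hF : (h : F) ≠ 0)
    {q : ℤ[X]} {N : ℕ} (hq : q ∣ (X ^ h - 1) ^ N)
    (hndvd : ¬ cyclotomic (orderOf a) ℤ ∣ q) :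
    ¬ (q.map (Int.castRingHom F)).IsRoot a := by
  -- `X ^ h - 1 = Φ * g` is separable over `F` and `a` is a root of `Φ`, so not of `g`;
  -- but `q ∣ g ^ N`, since the prime `Φ` does not divide `q`.
  obtain ⟨g, hg⟩ := cyclotomic_orderOf_dvd_X_pow_sub_one ha
  have hirr := cyclotomic.irreducible (orderOf_pos_of_natCast_ne_zero ha hF)
  have hqg : q ∣ g ^ N := by
    have hrel : IsRelPrime q (cyclotomic (orderOf a) ℤ ^ N) :=
      (hirr.isRelPrime_iff_not_dvd.mpr hndvd).symm.pow_right
    exact hrel.dvd_of_dvd_mul_left (by rwa [← mul_pow, ← hg])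
  have hsep : ((X ^ h - 1 : ℤ[X]).map (Int.castRingHom F)).Separable := by
    simpa using X_pow_sub_one_separable_iff.mpr hF
  have hmult := rootMultiplicity_le_one_of_separable hsep a
  rw [hg, Polynomial.map_mul] at hsep hmult
  rw [rootMultiplicity_mul hsep.ne_zero, map_cyclotomic_int,
    rootMultiplicity_cyclotomic_orderOf ha hF] at hmult
  intro hroot
  have hgroot : (g.map (Int.castRingHom F)).IsRoot a := by
    have hgN := hroot.dvd (Polynomial.map_dvd _ hqg)
    rw [Polynomial.map_pow, IsRoot.def, eval_pow] at hgN
    exact eq_zero_of_pow_eq_zero hgN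
  have := (rootMultiplicity_pos (right_ne_zero_of_mul hsep.ne_zero)).mpr hgroot
  omega

theorem rootMultiplicity_map_eq_multiplicity_cyclotomic (ha : a ^ h = 1) (hF : (h : F) ≠ 0)
    {p : ℤ[X]} (hmon : p.Monic) {N : ℕ} (hp : p ∣ (X ^ h - 1) ^ N) :
    rootMultiplicity a (p.map (Int.castRingHom F)) =
      multiplicity (cyclotomic (orderOf a) ℤ) p := by
  have hprime : Prime (cyclotomic (orderOf a) ℤ) :=
    (cyclotomic.irreducible (orderOf_pos_of_natCast_ne_zero ha hF)).prime
  obtain ⟨q, hpq, hndvd⟩ :=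
    (FiniteMultiplicity.of_prime_left hprime hmon.ne_zero).exists_eq_pow_mul_and_not_dvd
  have hmap0 := (hmon.map (Int.castRingHom F)).ne_zero
  generalize multiplicity (cyclotomic (orderOf a) ℤ) p = k at hpq ⊢
  subst hpq
  have hq : q ∣ (X ^ h - 1) ^ N := (dvd_mul_left _ _).trans hp
  rw [Polynomial.map_mul] at hmap0 ⊢
  rw [rootMultiplicity_mul hmap0, Polynomial.map_pow, rootMultiplicity_pow, map_cyclotomic_int,
    rootMultiplicity_cyclotomic_orderOf ha hF, mul_one,
    rootMultiplicity_eq_zero (not_isRoot_map_of_not_cyclotomic_orderOf_dvd ha hF hq hndvd),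
    add_zero]

end RootsOfUnity

theorem Matrix.finrank_ker_map_sub_smul_one_eq_multiplicity {ι : Type*} [Fintype ι]
    [DecidableEq ι] {M : Matrix ι ι ℤ} {h : ℕ} (hM : M ^ h = 1) {F : Type*} [Field F]
    (hF : (h : F) ≠ 0) {a : F} (ha : a ^ h = 1) :
    finrank F (LinearMap.ker (M.map (Int.cast : ℤ → F) - a • 1).mulVecLin) =
      multiplicity (cyclotomic (orderOf a) ℤ) M.charpoly := by
  have hmap : M.map (Int.cast : ℤ → F) = (Int.castRingHom F).mapMatrix M := rfl
  rw [hmap, finrank_ker_sub_smul_one_eq_rootMultiplicity (by rw [← map_pow, hM, map_one]) hF,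
    RingHom.mapMatrix_apply, charpoly_map,
    rootMultiplicity_map_eq_multiplicity_cyclotomic ha hF M.charpoly_monic
      (charpoly_dvd_X_pow_sub_one_pow hM)]

theorem finrank_ker_eq_of_primitiveRoot_general
    (h n : ℕ) (hpos : 0 < h)
    (M : Matrix (Fin n) (Fin n) ℤ) (hM : M ^ h = 1)
    (K : Type*) [Field K] (hchar : ¬ (ringChar K ∣ h))
    (ζ : K) (hζ : IsPrimitiveRoot ζ h) (m : ℤ) :
    finrank K (LinearMap.ker
        ((M.map (Int.cast : ℤ → K) - ζ ^ m • (1 : Matrix (Fin n) (Fin n) K)).mulVecLin)) =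
    finrank ℂ (LinearMap.ker
        ((M.map (Int.cast : ℤ → ℂ) -
          Complex.exp (2 * Real.pi * Complex.I * m / h) • (1 : Matrix (Fin n) (Fin n) ℂ)).mulVecLin)) := by
  have hK : (h : K) ≠ 0 := fun h0 => hchar ((ringChar.spec K h).mp h0)
  have hξ := Complex.isPrimitiveRoot_exp h hpos.ne'
  have hexp : Complex.exp (2 * Real.pi * Complex.I * m / h) =
      Complex.exp (2 * Real.pi * Complex.I / h) ^ m := by
    rw [← Complex.exp_int_mul]
    ring_nf
  rw [hexp, M.finrank_ker_map_sub_smul_one_eq_multiplicity hM hK (hζ.zpow_pow_eq_one m),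
    M.finrank_ker_map_sub_smul_one_eq_multiplicity hM (Nat.cast_ne_zero.mpr hpos.ne')
      (hξ.zpow_pow_eq_one m), hζ.orderOf_zpow_eq hξ m]

/-- Let `h` and `n` be positive integers and `M` an `n × n` integer
matrix with `M ^ h = 1`.  Let `K` be a field whose characteristic does not divide `h`,
containing a primitive `h`-th root of unity `ζ`, and let `m` be an integer.  Then the
`K`-dimension of the kernel of `M - ζ^m·id` acting on `K^n` equals the `ℂ`-dimension of
the kernel of `M - exp(2πim/h)·id` acting on `ℂ^n`. -/
theorem finrank_ker_eq_of_primitiveRoot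
    (h n : ℕ) (hpos : 0 < h) (npos : 0 < n)
    (M : Matrix (Fin n) (Fin n) ℤ) (hM : M ^ h = 1)
    (K : Type*) [Field K] (hchar : ¬ (ringChar K ∣ h))
    (ζ : K) (hζ : IsPrimitiveRoot ζ h) (m : ℤ) :
    finrank K (LinearMap.ker
        ((M.map (Int.cast : ℤ → K) - ζ ^ m • (1 : Matrix (Fin n) (Fin n) K)).mulVecLin)) =
    finrank ℂ (LinearMap.ker
        ((M.map (Int.cast : ℤ → ℂ) -
          Complex.exp (2 * Real.pi * Complex.I * m / h) • (1 : Matrix (Fin n) (Fin n) ℂ)).mulVecLin)) :=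
  finrank_ker_eq_of_primitiveRoot_general h n hpos M hM K hchar ζ hζ m
end

section
/- Let R be a commutative ring and I ⊆ R an ideal such that R is I-adically complete, and let A be a commutative R-algebra that is formally smooth over R. Then every R-algebra homomorphism f : A → R/I admits a lift to an R-algebra homomorphism g : A → R, i.e., the composition of g with the canonical projection R → R/I equals f. -/
universe u

section Aux

variable (R : Type u) [CommRing R] (I : Ideal R)
  (A : Type u) [CommRing A] [Algebra R A] [Algebra.FormallySmooth R A]
  (f : A →ₐ[R] R ⧸ I)

/-- A compatible sequence of lifts of `f` modulo `I ^ (n+1)`. -/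
noncomputable def FormallySmooth.liftSeq : ∀ n : ℕ, A →ₐ[R] R ⧸ I ^ (n + 1)
  | 0 => ((Ideal.quotientEquivAlgOfEq R (show I = I ^ (0 + 1) by rw [pow_one])).toAlgHom).comp f
  | (n + 1) =>
    Algebra.FormallySmooth.lift
      ((I ^ (n + 1)).map (Ideal.Quotient.mkₐ R (I ^ (n + 2))))
      ⟨2, by
        rw [← Ideal.map_pow]
        refine le_antisymm (le_trans (Ideal.map_mono ?_)
          (le_of_eq (Ideal.map_quotient_self _))) bot_le
        rw [← pow_mul]
        exact Ideal.pow_le_pow_right (by omega)⟩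
      (((DoubleQuot.quotQuotEquivQuotOfLEₐ R
          (Ideal.pow_le_pow_right (by omega) : I ^ (n + 2) ≤ I ^ (n + 1))).symm.toAlgHom).comp
        (FormallySmooth.liftSeq n))

theorem FormallySmooth.liftSeq_compat (n : ℕ) (a : A) (r : R)
    (h : Ideal.Quotient.mk (I ^ (n + 1 + 1)) r = FormallySmooth.liftSeq R I A f (n + 1) a) :
    Ideal.Quotient.mk (I ^ (n + 1)) r = FormallySmooth.liftSeq R I A f n a := by
  have hle : I ^ (n + 2) ≤ I ^ (n + 1) := Ideal.pow_le_pow_right (by omega)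
  have key : Ideal.Quotient.mk ((I ^ (n + 1)).map (Ideal.Quotient.mkₐ R (I ^ (n + 2))))
      (FormallySmooth.liftSeq R I A f (n + 1) a)
      = (DoubleQuot.quotQuotEquivQuotOfLEₐ R hle).symm (FormallySmooth.liftSeq R I A f n a) := by
    rw [FormallySmooth.liftSeq]
    exact Algebra.FormallySmooth.mk_lift _ _ _ a
  rw [← h] at key
  have key2 := congrArg (DoubleQuot.quotQuotEquivQuotOfLEₐ R hle) key
  rw [AlgEquiv.apply_symm_apply] at key2
  rw [← key2]
  rfl

theorem FormallySmooth.liftSeq_compat' {m n : ℕ} (hmn : m ≤ n) (a : A) (r : R)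
    (h : Ideal.Quotient.mk (I ^ (n + 1)) r = FormallySmooth.liftSeq R I A f n a) :
    Ideal.Quotient.mk (I ^ (m + 1)) r = FormallySmooth.liftSeq R I A f m a := by
  induction n with
  | zero => obtain rfl : m = 0 := Nat.le_zero.mp hmn; exact h
  | succ n ih =>
    rcases Nat.lt_or_ge m (n + 1) with hm | hm
    · exact ih (by omega) (FormallySmooth.liftSeq_compat R I A f n a r h)
    · obtain rfl : m = n + 1 := le_antisymm hmn hm; exact h

end Aux

/-- Let `R` be a commutative ring and `I ⊆ R` an ideal such that `R` is
`I`-adically complete, and let `A` be a commutative `R`-algebra that is formally smooth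
over `R`.  Then every `R`-algebra homomorphism `f : A → R/I` lifts to an `R`-algebra
homomorphism `g : A → R`, i.e. composing `g` with the canonical projection `R → R/I`
gives back `f`. -/
theorem FormallySmooth.exists_lift_of_isAdicComplete
    (R : Type u) [CommRing R] (I : Ideal R) [IsAdicComplete I R]
    (A : Type u) [CommRing A] [Algebra R A] [Algebra.FormallySmooth R A]
    (f : A →ₐ[R] R ⧸ I) :
    ∃ g : A →ₐ[R] R, (Ideal.Quotient.mkₐ R I).comp g = f := by
  classical
  set s := FormallySmooth.liftSeq R I A f with hs
  have hlim : ∀ a : A, ∃ L : R, ∀ n, Ideal.Quotient.mk (I ^ (n + 1)) L = s n a := by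
    intro a
    choose r hr using fun n => Ideal.Quotient.mk_surjective (s n a)
    have hc : ∀ {m n : ℕ}, m ≤ n → r m ≡ r n [SMOD (I ^ m • ⊤ : Submodule R R)] := by
      intro m n hmn
      rw [SModEq.sub_mem, smul_eq_mul, Ideal.mul_top]
      have h1 : Ideal.Quotient.mk (I ^ (m + 1)) (r n) = s m a :=
        FormallySmooth.liftSeq_compat' R I A f hmn a _ (hr n)
      have h2 : r m - r n ∈ I ^ (m + 1) := by
        rw [← Ideal.Quotient.eq_zero_iff_mem, map_sub, h1, hr m, sub_self]
      exact Ideal.pow_le_pow_right (by omega) h2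
    obtain ⟨L, hL⟩ := IsPrecomplete.prec (IsAdicComplete.toIsPrecomplete (I := I) (M := R)) hc
    refine ⟨L, fun n => ?_⟩
    have h3 := hL (n + 1)
    rw [SModEq.sub_mem, smul_eq_mul, Ideal.mul_top] at h3
    have h4 : Ideal.Quotient.mk (I ^ (n + 1)) (r (n + 1)) = s n a :=
      FormallySmooth.liftSeq_compat' R I A f (Nat.le_succ n) a _ (hr (n + 1))
    calc Ideal.Quotient.mk (I ^ (n + 1)) L
        = Ideal.Quotient.mk (I ^ (n + 1)) (r (n + 1)) := by
          rw [Ideal.Quotient.mk_eq_mk_iff_sub_mem]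
          simpa using (neg_mem h3)
      _ = s n a := h4
  choose g0 hg0 using hlim
  have heq : ∀ x y : R, (∀ n : ℕ, Ideal.Quotient.mk (I ^ (n + 1)) x
      = Ideal.Quotient.mk (I ^ (n + 1)) y) → x = y := by
    intro x y h
    rw [← sub_eq_zero]
    refine IsHausdorff.haus (IsAdicComplete.toIsHausdorff (I := I) (M := R)) _ fun n => ?_
    rw [SModEq.sub_mem, smul_eq_mul, Ideal.mul_top, sub_zero]
    match n with
    | 0 => simp
    | (m + 1) => rw [← Ideal.Quotient.eq_zero_iff_mem, map_sub, h m, sub_self]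
  have key : ∀ (a : A) (n : ℕ), Ideal.Quotient.mk (I ^ (n + 1)) (g0 a) = s n a := hg0
  refine ⟨⟨⟨⟨⟨g0, ?_⟩, ?_⟩, ?_, ?_⟩, ?_⟩, ?_⟩
  · exact heq _ _ fun n => by rw [key, map_one, map_one]
  · intro x y
    exact heq _ _ fun n => by rw [key, map_mul, map_mul, key, key]
  · exact heq _ _ fun n => by rw [key, map_zero, map_zero]
  · intro x y
    exact heq _ _ fun n => by rw [key, map_add, map_add, key, key]
  · intro x
    exact heq _ _ fun n => by simp [key]
  · ext a
    show Ideal.Quotient.mk I (g0 a) = f a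
    apply (Ideal.quotientEquivAlgOfEq R (show I = I ^ (0 + 1) by rw [pow_one])).injective
    rw [Ideal.quotientEquivAlgOfEq_mk, key a 0, hs, FormallySmooth.liftSeq]
    rfl
end
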